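/- arXiv:1903.08115 — 3 statements merged into one kernel-verified Lean document; each statement's English description precedes it below -/
import Mathlib

section
/- Let $S$ be a real random variable with $E[e^{-S}] = 1$, and suppose $S \in (-\infty, -s_-] \cup [s_+, \infty)$ almost surely, where $s_- > 0$ and $s_+ > 0$. Let $p_- = \mathbb{P}(S \le -s_-)$ and $p_+ = \mathbb{P}(S \ge s_+)$. Then $p_- \le 1/(e^{s_-} - e^{-s_+})$ and $p_+ \ge 1 - 1/(e^{s_-} - e^{-s_+})$. -/
open MeasureTheory ProbabilityTheory

/-!
Chernoff's bound for `-S` with exponent `1` gives `p₋ ≤ e^{-s₋} E[e^{-S}] = e^{-s₋}`, which is at most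
`1/(e^{s₋} - e^{-s₊})`. Since `S` a.s. lies in one of the two half-lines, `p₋ + p₊ ≥ 1`, and the
bound on `p₊` follows.
-/

theorem measureReal_le_neg_le_exp_neg_mul_integral {Ω : Type*} {m0 : MeasurableSpace Ω}
    {μ : Measure Ω} [IsFiniteMeasure μ] {S : Ω → ℝ}
    (hexp : Integrable (fun ω => Real.exp (-S ω)) μ) (a : ℝ) :
    μ.real {ω | S ω ≤ -a} ≤ Real.exp (-a) * ∫ ω, Real.exp (-S ω) ∂μ := by
  simpa only [mgf, neg_mul, one_mul, Pi.neg_apply, le_neg] using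
    measure_ge_le_exp_mul_mgf (X := -S) (μ := μ) a zero_le_one
      (by simpa only [one_mul, Pi.neg_apply] using hexp)

theorem one_le_measureReal_add_of_ae_or {Ω : Type*} {m0 : MeasurableSpace Ω}
    {μ : Measure Ω} [IsProbabilityMeasure μ] {s t : Set Ω} (h : ∀ᵐ ω ∂μ, ω ∈ s ∨ ω ∈ t) :
    1 ≤ μ.real s + μ.real t := by
  have hfull : (s ∪ t : Set Ω) =ᵐ[μ] (Set.univ : Set Ω) := ae_eq_univ.mpr (ae_iff.mp h)
  calc 1 = μ.real (s ∪ t) := by rw [measureReal_congr hfull, probReal_univ]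
    _ ≤ μ.real s + μ.real t := measureReal_union_le _ _

theorem Real.exp_neg_le_one_div_exp_sub_exp_neg {a b : ℝ} (hab : 0 < a + b) :
    Real.exp (-a) ≤ 1 / (Real.exp a - Real.exp (-b)) := by
  have hlt : Real.exp (-b) < Real.exp a := Real.exp_lt_exp.mpr (by linarith)
  rw [Real.exp_neg, ← one_div]
  exact one_div_le_one_div_of_le (sub_pos.mpr hlt) (sub_le_self _ (Real.exp_pos _).le)

theorem stmt3_general {Ω : Type*} {m0 : MeasurableSpace Ω} {μ : Measure Ω} [IsProbabilityMeasure μ]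
    (S : Ω → ℝ)
    (sm sp : ℝ) (hsm : 0 < sm) (hsp : 0 < sp)
    (hsupp : ∀ᵐ ω ∂μ, S ω ≤ -sm ∨ sp ≤ S ω)
    (hexp : Integrable (fun ω => Real.exp (-S ω)) μ)
    (h1 : ∫ ω, Real.exp (-S ω) ∂μ = 1)
    (pminus pplus : ℝ)
    (hpminus : pminus = (μ {ω | S ω ≤ -sm}).toReal)
    (hpplus : pplus = (μ {ω | sp ≤ S ω}).toReal) :
    pminus ≤ 1 / (Real.exp sm - Real.exp (-sp)) ∧
      1 - 1 / (Real.exp sm - Real.exp (-sp)) ≤ pplus := by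
  have hminus : pminus ≤ Real.exp (-sm) := by
    simpa only [hpminus, h1, mul_one, measureReal_def] using
      measureReal_le_neg_le_exp_neg_mul_integral hexp sm
  have hcover : 1 ≤ pminus + pplus :=
    hpminus ▸ hpplus ▸ one_le_measureReal_add_of_ae_or (s := {ω | S ω ≤ -sm}) hsupp
  have hbound := Real.exp_neg_le_one_div_exp_sub_exp_neg (add_pos hsm hsp)
  constructor <;> linarith

/-- Bounds on the splitting probabilities of entropy production at a two-boundary
first-passage time: if `E[exp(-S)] = 1` and `S ∈ (-∞, -s₋] ∪ [s₊, ∞)` a.s. with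
`s₋, s₊ > 0`, then `p₋ ≤ 1/(e^{s₋} - e^{-s₊})` and `p₊ ≥ 1 - 1/(e^{s₋} - e^{-s₊})`. -/
theorem stmt3 {Ω : Type*} {m0 : MeasurableSpace Ω} {μ : Measure Ω} [IsProbabilityMeasure μ]
    (S : Ω → ℝ) (hmeas : Measurable S)
    (sm sp : ℝ) (hsm : 0 < sm) (hsp : 0 < sp)
    (hsupp : ∀ᵐ ω ∂μ, S ω ≤ -sm ∨ sp ≤ S ω)
    (hexp : Integrable (fun ω => Real.exp (-S ω)) μ)
    (h1 : ∫ ω, Real.exp (-S ω) ∂μ = 1)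
    (pminus pplus : ℝ)
    (hpminus : pminus = (μ {ω | S ω ≤ -sm}).toReal)
    (hpplus : pplus = (μ {ω | sp ≤ S ω}).toReal) :
    pminus ≤ 1 / (Real.exp sm - Real.exp (-sp)) ∧
      1 - 1 / (Real.exp sm - Real.exp (-sp)) ≤ pplus :=
  stmt3_general (m0 := m0) S sm sp hsm hsp hsupp hexp h1 pminus pplus hpminus hpplus
end

section
/- Let $\mathsf{T}_h > \mathsf{T}_c > 0$ and suppose real numbers $W, Q_h, Q_c, \Delta v, \Delta S$ satisfy the first law $Q_h + Q_c + W = \Delta v$ and the second law $Q_h/\mathsf{T}_h + Q_c/\mathsf{T}_c \le \Delta S$. If $Q_h > 0$, then $-W/Q_h \le \eta_C - \Delta \mathcal{F}_c / Q_h$, where $\eta_C = 1 - \mathsf{T}_c/\mathsf{T}_h$ and $\Delta \mathcal{F}_c = \Delta v - \mathsf{T}_c \Delta S$. -/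
lemma neg_work_le_carnot_sub_free_energy {Th Tc W Qh Qc Δv ΔS : ℝ} (hTc : 0 < Tc)
    (hfirst : Qh + Qc + W = Δv) (hsecond : Qh / Th + Qc / Tc ≤ ΔS) :
    -W ≤ (1 - Tc / Th) * Qh - (Δv - Tc * ΔS) := by
  have hscaled : Tc * (Qh / Th) + Qc ≤ Tc * ΔS := by
    calc Tc * (Qh / Th) + Qc = Tc * (Qh / Th + Qc / Tc) := by field_simp
      _ ≤ Tc * ΔS := mul_le_mul_of_nonneg_left hsecond hTc.le
  have hcarnot : (1 - Tc / Th) * Qh = Qh - Tc * (Qh / Th) := by ring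
  linarith

theorem stmt18_general (Th Tc W Qh Qc Δv ΔS : ℝ) (hTc : 0 < Tc)
    (hfirst : Qh + Qc + W = Δv)
    (hsecond : Qh / Th + Qc / Tc ≤ ΔS)
    (hQh : 0 < Qh) :
    -W / Qh ≤ (1 - Tc / Th) - (Δv - Tc * ΔS) / Qh := by
  calc -W / Qh ≤ ((1 - Tc / Th) * Qh - (Δv - Tc * ΔS)) / Qh :=
        div_le_div_of_nonneg_right (neg_work_le_carnot_sub_free_energy hTc hfirst hsecond) hQh.le
    _ = (1 - Tc / Th) - (Δv - Tc * ΔS) / Qh := by field_simp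

/-- Stopping-time efficiency bound for a heat engine: from the first law
`Q_h + Q_c + W = Δv` and the second law `Q_h/T_h + Q_c/T_c ≤ ΔS`, if `Q_h > 0`
then `-W/Q_h ≤ η_C - ΔF_c/Q_h` where `η_C = 1 - T_c/T_h` and
`ΔF_c = Δv - T_c ΔS`. -/
theorem stmt18 (Th Tc W Qh Qc Δv ΔS : ℝ) (hT : Tc < Th) (hTc : 0 < Tc)
    (hfirst : Qh + Qc + W = Δv)
    (hsecond : Qh / Th + Qc / Tc ≤ ΔS)
    (hQh : 0 < Qh) :
    -W / Qh ≤ (1 - Tc / Th) - (Δv - Tc * ΔS) / Qh :=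
  stmt18_general Th Tc W Qh Qc Δv ΔS hTc hfirst hsecond hQh
end

section
/- Let $\mathsf{T}_h > \mathsf{T}_c > 0$ and suppose real numbers $W, Q_h, Q_c, \Delta v, \Delta S$ satisfy $Q_h + Q_c + W = \Delta v$ and $Q_h/\mathsf{T}_h + Q_c/\mathsf{T}_c \le \Delta S$. If $W > 0$, $Q_c > 0$, and $(\mathsf{T}_h/\mathsf{T}_c - 1) + \Delta\mathcal{F}_h/Q_c > 0$ where $\Delta\mathcal{F}_h = \Delta v - \mathsf{T}_h \Delta S$, then the coefficient of performance $\epsilon = Q_c/W$ satisfies $\epsilon \le \left[(\mathsf{T}_h/\mathsf{T}_c - 1) + \Delta\mathcal{F}_h/Q_c\right]^{-1}$. In particular, when $\Delta\mathcal{F}_h = 0$ one recovers $\epsilon \le \mathsf{T}_c/(\mathsf{T}_h - \mathsf{T}_c)$. -/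
/-! Multiplying the second law by `T_h > 0` and eliminating `Q_h` with the first law gives
`W ≥ Q_c (T_h/T_c - 1) + ΔF_h`; dividing by `Q_c W` turns this into the bound on `Q_c / W`. -/

lemma work_ge_of_first_law_of_second_law {Th Tc W Qh Qc Δv ΔS : ℝ} (hTh : 0 < Th)
    (hfirst : Qh + Qc + W = Δv) (hsecond : Qh / Th + Qc / Tc ≤ ΔS) :
    Qc * (Th / Tc - 1) + (Δv - Th * ΔS) ≤ W := by
  have hscaled : Qh + Th * (Qc / Tc) ≤ Th * ΔS := by
    calc Qh + Th * (Qc / Tc) = Th * (Qh / Th + Qc / Tc) := by field_simp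
      _ ≤ Th * ΔS := mul_le_mul_of_nonneg_left hsecond hTh.le
  have hswap : Qc * (Th / Tc) = Th * (Qc / Tc) := by ring
  linarith

lemma div_le_inv_add_div_of_mul_add_le {Q W η F : ℝ} (hW : 0 < W) (hQ : 0 < Q)
    (hpos : 0 < η + F / Q) (hle : Q * η + F ≤ W) : Q / W ≤ (η + F / Q)⁻¹ := by
  have hexpand : Q * (η + F / Q) = Q * η + F := by field_simp
  rw [inv_eq_one_div, div_le_div_iff₀ hW hpos]
  linarith

lemma inv_div_sub_one {a b : ℝ} (hb : b ≠ 0) : (a / b - 1)⁻¹ = b / (a - b) := by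
  rw [div_sub_one hb, inv_div]

/-- Refrigerator-mode bound at stopping times: from the first law
`Q_h + Q_c + W = Δv` and the second law `Q_h/T_h + Q_c/T_c ≤ ΔS`, if `W > 0`,
`Q_c > 0` and `(T_h/T_c - 1) + ΔF_h/Q_c > 0` with `ΔF_h = Δv - T_h ΔS`, then the
coefficient of performance `ε = Q_c/W` satisfies
`ε ≤ ((T_h/T_c - 1) + ΔF_h/Q_c)⁻¹`; in particular for `ΔF_h = 0` one recovers
`ε ≤ T_c/(T_h - T_c)`. -/
theorem stmt19 (Th Tc W Qh Qc Δv ΔS : ℝ) (hT : Tc < Th) (hTc : 0 < Tc)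
    (hfirst : Qh + Qc + W = Δv)
    (hsecond : Qh / Th + Qc / Tc ≤ ΔS)
    (hW : 0 < W) (hQc : 0 < Qc)
    (hpos : 0 < (Th / Tc - 1) + (Δv - Th * ΔS) / Qc) :
    Qc / W ≤ ((Th / Tc - 1) + (Δv - Th * ΔS) / Qc)⁻¹ ∧
      (Δv - Th * ΔS = 0 → Qc / W ≤ Tc / (Th - Tc)) := by
  have hwork := work_ge_of_first_law_of_second_law (hTc.trans hT) hfirst hsecond
  have hcop := div_le_inv_add_div_of_mul_add_le hW hQc hpos hwork
  refine ⟨hcop, fun hF => ?_⟩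
  rwa [hF, zero_div, add_zero, inv_div_sub_one hTc.ne'] at hcop
end
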